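/- arXiv:1902.05187 — 2 statements merged into one kernel-verified Lean document; each statement's English description precedes it below -/
import Mathlib

section
/- Let n ≥ 2 and a > 2−n. Suppose u ∈ C²(ℝⁿ₊) ∩ C⁰(closure of ℝⁿ₊) satisfies div(yₙ^a ∇u) = 0 in ℝⁿ₊, u > 1/2 in ℝⁿ₊, and u = 1 on ∂ℝⁿ₊. Then for every x ∈ ∂ℝⁿ₊ and every λ > 0, u_{x,λ}(y) ≤ u(y) for all y ∈ ℝⁿ₊ with |y−x| ≥ λ, where u_{x,λ}(y) = (λ/|y−x|)^{n−2+a} u(x + λ²(y−x)/|y−x|²). -/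
open Real Filter

/-- Partial derivative of `u` in the `i`-th coordinate direction. -/
noncomputable def partialD {n : ℕ} (i : Fin n) (u : EuclideanSpace ℝ (Fin n) → ℝ)
    (y : EuclideanSpace ℝ (Fin n)) : ℝ :=
  fderiv ℝ u y (EuclideanSpace.single i 1)

/-- The Laplacian of `u`, as a sum of repeated partial derivatives. -/
noncomputable def lapl {n : ℕ} (u : EuclideanSpace ℝ (Fin n) → ℝ)
    (y : EuclideanSpace ℝ (Fin n)) : ℝ :=
  ∑ j, partialD j (fun z => partialD j u z) y

/-- The weighted operator `div(yᵢ^a ∇u) = yᵢ^a Δu + a yᵢ^(a-1) ∂u/∂yᵢ`,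
where `i` plays the role of the last coordinate. -/
noncomputable def divA {n : ℕ} (i : Fin n) (a : ℝ) (u : EuclideanSpace ℝ (Fin n) → ℝ)
    (y : EuclideanSpace ℝ (Fin n)) : ℝ :=
  (y i) ^ a * lapl u y + a * (y i) ^ (a - 1) * partialD i u y

/-- The inversion `y ↦ x + λ²(y-x)/|y-x|²` centered at `x` with radius `λ`. -/
noncomputable def inversion {n : ℕ} (x : EuclideanSpace ℝ (Fin n)) (lam : ℝ)
    (y : EuclideanSpace ℝ (Fin n)) : EuclideanSpace ℝ (Fin n) :=
  x + (lam ^ 2 / ‖y - x‖ ^ 2) • (y - x)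

/-- The Kelvin-type transform `u_{x,λ}(y) = (λ/|y-x|)^(n-2+a) u(x + λ²(y-x)/|y-x|²)`. -/
noncomputable def kelvin {n : ℕ} (a : ℝ) (x : EuclideanSpace ℝ (Fin n)) (lam : ℝ)
    (u : EuclideanSpace ℝ (Fin n) → ℝ) (y : EuclideanSpace ℝ (Fin n)) : ℝ :=
  (lam / ‖y - x‖) ^ ((n : ℝ) - 2 + a) * u (inversion x lam y)

/-!
The weighted operator `L u = div(yₙ^a ∇u)` is preserved by the Kelvin transform. The inversion
`ι(y) = x + λ²(y-x)/|y-x|²` has Jacobian `λ²/|y-x|²` times a reflection, and a direct computation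
gives, when `u` is `C²` near `ι y`, `L u (ι y) = 0` and `xₙ = 0`,
`L(|y-x|^{2e} u(ι y))`
`  = (2e + n - 2 + a) yₙ^a |y-x|^{2e} (2e u(ι y)/|y-x|² - 2λ² (y-x)·∇u(ι y)/|y-x|⁴)`.
For `2e = -(n-2+a)` this makes `u_{x,λ}` a solution, and for `u = 1`, `2e = -(n-2+a)/2` it makes
`|y-x|^{-(n-2+a)/2}` a strict supersolution, since `n - 2 + a > 0`.

On the half-annulus `K = {yₙ ≥ 0, λ ≤ |y-x| ≤ R}` the function `u - u_{x,λ} + ε |y-x|^{-(n-2+a)/2}`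
is positive on the boundary: on `yₙ = 0` since `u_{x,λ} ≤ 1 = u`, on `|y-x| = λ` since
`u_{x,λ} = u` there, and on `|y-x| = R` since `u_{x,λ} → 0` at infinity while `u > 1/2`. At an
interior minimum `L` would be both `≥ 0` and `< 0`, so the function is positive on `K`; letting
`ε → 0` gives `u_{x,λ} ≤ u`.
-/

open Topology

variable {n : ℕ} {x y : EuclideanSpace ℝ (Fin n)}

section PartialDeriv

/-- Unlike a line derivative, this requires `f` to be Fréchet differentiable at `y`, so that the
chain rule applies. -/
def HasPartialDerivAt (j : Fin n) (f : EuclideanSpace ℝ (Fin n) → ℝ) (c : ℝ)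
    (y : EuclideanSpace ℝ (Fin n)) : Prop :=
  ∃ L : EuclideanSpace ℝ (Fin n) →L[ℝ] ℝ, HasFDerivAt f L y ∧ L (EuclideanSpace.single j 1) = c

variable {j : Fin n} {f g : EuclideanSpace ℝ (Fin n) → ℝ} {c d : ℝ}

theorem HasFDerivAt.hasPartialDerivAt {L : EuclideanSpace ℝ (Fin n) →L[ℝ] ℝ}
    (h : HasFDerivAt f L y) :
    HasPartialDerivAt j f (L (EuclideanSpace.single j 1)) y :=
  ⟨L, h, rfl⟩

theorem HasPartialDerivAt.partialD_eq (h : HasPartialDerivAt j f c y) : partialD j f y = c := by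
  obtain ⟨L, hL, rfl⟩ := h
  rw [partialD, hL.fderiv]

theorem HasPartialDerivAt.congr_deriv (h : HasPartialDerivAt j f c y) (e : c = d) :
    HasPartialDerivAt j f d y :=
  e ▸ h

theorem HasPartialDerivAt.congr_of_eventuallyEq (h : HasPartialDerivAt j f c y)
    (hfg : f =ᶠ[𝓝 y] g) : HasPartialDerivAt j g c y := by
  obtain ⟨L, hL, rfl⟩ := h
  exact ⟨L, hL.congr_of_eventuallyEq hfg.symm, rfl⟩

theorem hasPartialDerivAt_const (j : Fin n) (c : ℝ) (y : EuclideanSpace ℝ (Fin n)) :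
    HasPartialDerivAt j (fun _ => c) 0 y :=
  ⟨0, hasFDerivAt_const c y, rfl⟩

theorem hasPartialDerivAt_sub_apply (j k : Fin n) (x y : EuclideanSpace ℝ (Fin n)) :
    HasPartialDerivAt j (fun z => z k - x k) (if j = k then 1 else 0) y := by
  have h := (EuclideanSpace.proj k : EuclideanSpace ℝ (Fin n) →L[ℝ] ℝ).hasFDerivAt (x := y)
  exact (h.sub_const (x k)).hasPartialDerivAt.congr_deriv (by simp [PiLp.single_apply, eq_comm])

theorem HasPartialDerivAt.add (hf : HasPartialDerivAt j f c y) (hg : HasPartialDerivAt j g d y) :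
    HasPartialDerivAt j (fun z => f z + g z) (c + d) y := by
  obtain ⟨L, hL, rfl⟩ := hf
  obtain ⟨M, hM, rfl⟩ := hg
  exact (hL.add hM).hasPartialDerivAt

theorem HasPartialDerivAt.mul (hf : HasPartialDerivAt j f c y) (hg : HasPartialDerivAt j g d y) :
    HasPartialDerivAt j (fun z => f z * g z) (c * g y + f y * d) y := by
  obtain ⟨L, hL, rfl⟩ := hf
  obtain ⟨M, hM, rfl⟩ := hg
  exact (hL.mul hM).hasPartialDerivAt.congr_deriv
    (by simp only [add_apply, smul_apply, smul_eq_mul]; ring)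

theorem HasPartialDerivAt.const_mul (hf : HasPartialDerivAt j f c y) (a : ℝ) :
    HasPartialDerivAt j (fun z => a * f z) (a * c) y := by
  simpa using (hasPartialDerivAt_const j a y).mul hf

theorem HasPartialDerivAt.sum {ι : Type*} {s : Finset ι} {f : ι → EuclideanSpace ℝ (Fin n) → ℝ}
    {c : ι → ℝ} (hf : ∀ k ∈ s, HasPartialDerivAt j (f k) (c k) y) :
    HasPartialDerivAt j (fun z => ∑ k ∈ s, f k z) (∑ k ∈ s, c k) y := by
  classical
  induction s using Finset.induction with
  | empty => simpa using hasPartialDerivAt_const j 0 y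
  | insert k s hk ih =>
    simp only [Finset.sum_insert hk]
    exact (hf k (Finset.mem_insert_self k s)).add
      (ih fun l hl => hf l (Finset.mem_insert_of_mem hl))

theorem HasPartialDerivAt.inv (hf : HasPartialDerivAt j f c y) (h0 : f y ≠ 0) :
    HasPartialDerivAt j (fun z => (f z)⁻¹) (-c / f y ^ 2) y := by
  obtain ⟨L, hL, rfl⟩ := hf
  exact ((hasDerivAt_inv h0).comp_hasFDerivAt y hL).hasPartialDerivAt.congr_deriv
    (by simp only [neg_smul, neg_apply, smul_apply, smul_eq_mul]; ring)

theorem HasPartialDerivAt.rpow_const (hf : HasPartialDerivAt j f c y) (h0 : f y ≠ 0) (p : ℝ) :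
    HasPartialDerivAt j (fun z => f z ^ p) (p * f y ^ (p - 1) * c) y := by
  obtain ⟨L, hL, rfl⟩ := hf
  exact (hL.rpow_const (Or.inl h0)).hasPartialDerivAt

theorem ContinuousLinearMap.apply_eq_sum_mul_single (L : EuclideanSpace ℝ (Fin n) →L[ℝ] ℝ)
    (w : EuclideanSpace ℝ (Fin n)) :
    L w = ∑ k, w k * L (EuclideanSpace.single k 1) := by
  conv_lhs => rw [← (EuclideanSpace.basisFun (Fin n) ℝ).sum_repr w]
  simp [map_sum]

theorem hasPartialDerivAt_comp {g : EuclideanSpace ℝ (Fin n) → EuclideanSpace ℝ (Fin n)}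
    {c : Fin n → ℝ}
    (hf : DifferentiableAt ℝ f (g y)) (hg : DifferentiableAt ℝ g y)
    (hgc : ∀ k, HasPartialDerivAt j (fun z => g z k) (c k) y) :
    HasPartialDerivAt j (fun z => f (g z)) (∑ k, c k * partialD k f (g y)) y := by
  refine (hf.hasFDerivAt.comp y hg.hasFDerivAt).hasPartialDerivAt.congr_deriv ?_
  rw [ContinuousLinearMap.comp_apply, ContinuousLinearMap.apply_eq_sum_mul_single]
  refine Finset.sum_congr rfl fun k _ => ?_
  have hk : HasFDerivAt (fun z => g z k)
      ((EuclideanSpace.proj k : EuclideanSpace ℝ (Fin n) →L[ℝ] ℝ).comp (fderiv ℝ g y)) y :=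
    (EuclideanSpace.proj (𝕜 := ℝ) k).hasFDerivAt.comp y hg.hasFDerivAt
  rw [← (hgc k).partialD_eq, partialD, partialD, hk.fderiv]
  rfl

theorem ContDiffAt.differentiableAt_partialD (hf : ContDiffAt ℝ 2 f y) (k : Fin n) :
    DifferentiableAt ℝ (fun z => partialD k f z) y :=
  ((hf.fderiv_right le_rfl).differentiableAt one_ne_zero).clm_apply (differentiableAt_const _)

end PartialDeriv

section Operator

variable {i j : Fin n} {a : ℝ} {f g : EuclideanSpace ℝ (Fin n) → ℝ} {p : EuclideanSpace ℝ (Fin n)}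

theorem lapl_eq_of_divA_eq_zero (hp : 0 < p i) (h : divA i a f p = 0) :
    lapl f p = -a * partialD i f p / p i := by
  rw [divA, Real.rpow_sub_one hp.ne'] at h
  field_simp at h
  rw [mul_zero] at h
  rw [eq_div_iff hp.ne']
  linarith [(mul_eq_zero.1 h).resolve_left (Real.rpow_pos_of_pos hp a).ne']

theorem partialD_congr_of_eventuallyEq (h : f =ᶠ[𝓝 p] g) (j : Fin n) :
    partialD j f p = partialD j g p := by
  rw [partialD, partialD, h.fderiv_eq]

theorem partialD_add_const_mul (hf : DifferentiableAt ℝ f p) (hg : DifferentiableAt ℝ g p)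
    (c : ℝ) (j : Fin n) :
    partialD j (fun z => f z + c * g z) p = partialD j f p + c * partialD j g p :=
  (hf.hasFDerivAt.hasPartialDerivAt.add
    (hg.hasFDerivAt.hasPartialDerivAt.const_mul c)).partialD_eq

theorem divA_add_const_mul (hf : ContDiffAt ℝ 2 f p) (hg : ContDiffAt ℝ 2 g p) (c : ℝ) :
    divA i a (fun z => f z + c * g z) p = divA i a f p + c * divA i a g p := by
  have h1 : ∀ j, (fun z => partialD j (fun w => f w + c * g w) z)
      =ᶠ[𝓝 p] fun z => partialD j f z + c * partialD j g z := fun j => by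
    filter_upwards [hf.eventually (by simp), hg.eventually (by simp)] with z hfz hgz
    exact partialD_add_const_mul (hfz.differentiableAt two_ne_zero)
      (hgz.differentiableAt two_ne_zero) c j
  simp only [divA, lapl, partialD_congr_of_eventuallyEq (h1 _),
    partialD_add_const_mul (hf.differentiableAt_partialD _) (hg.differentiableAt_partialD _),
    partialD_add_const_mul (hf.differentiableAt two_ne_zero) (hg.differentiableAt two_ne_zero),
    Finset.sum_add_distrib, ← Finset.mul_sum]
  ring

theorem divA_const (c : ℝ) : divA i a (fun _ => c) p = 0 := by
  simp [divA, lapl, partialD]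

theorem IsLocalMin.deriv_deriv_nonneg {h : ℝ → ℝ} {t₀ : ℝ} (hmin : IsLocalMin h t₀)
    (hd : ∀ᶠ t in 𝓝 t₀, DifferentiableAt ℝ h t) : 0 ≤ deriv (deriv h) t₀ := by
  by_contra! hneg
  have hdec := deriv_neg_right_of_sign_deriv (nhdsWithin_le_nhds
    (eventually_nhdsWithin_sign_eq_of_deriv_neg hneg hmin.deriv_eq_zero))
  obtain ⟨b, hb, hsub⟩ := mem_nhdsGT_iff_exists_Ioo_subset.1
    (hdec.and (nhdsWithin_le_nhds (hd.and hmin)))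
  obtain ⟨c, hc, hcb⟩ := exists_between (show t₀ < b from hb)
  have hcont : ContinuousOn h (Set.Icc t₀ c) := fun t ht => by
    rcases ht.1.eq_or_lt with rfl | ht₀
    · exact hd.self_of_nhds.continuousAt.continuousWithinAt
    · exact (hsub ⟨ht₀, by linarith [ht.2]⟩).2.1.continuousAt.continuousWithinAt
  have hanti : StrictAntiOn h (Set.Icc t₀ c) := strictAntiOn_of_deriv_neg (convex_Icc t₀ c) hcont
    (by rw [interior_Icc]; exact fun t ht => (hsub ⟨ht.1, by linarith [ht.2]⟩).1)
  linarith [hanti ⟨le_rfl, hc.le⟩ ⟨hc.le, le_rfl⟩ hc, (hsub ⟨hc, by linarith⟩).2.2]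

theorem IsLocalMin.partialD_partialD_nonneg (hf : ContDiffAt ℝ 2 f p) (hmin : IsLocalMin f p)
    (j : Fin n) : 0 ≤ partialD j (fun z => partialD j f z) p := by
  have hγ : ∀ t : ℝ, HasDerivAt (fun t : ℝ => p + t • EuclideanSpace.single j (1 : ℝ))
      (EuclideanSpace.single j 1) t := fun t => by
    simpa using ((hasDerivAt_id t).smul_const (EuclideanSpace.single j (1 : ℝ))).const_add p
  set γ := fun t : ℝ => p + t • EuclideanSpace.single j (1 : ℝ)
  have hγ0 : γ 0 = p := by simp [γ]
  have hnear : ∀ᶠ t in 𝓝 0, ContDiffAt ℝ 2 f (γ t) :=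
    (hγ 0).continuousAt.eventually (hγ0 ▸ hf.eventually (by simp))
  have hderiv : deriv (f ∘ γ) =ᶠ[𝓝 0] fun t => partialD j f (γ t) := by
    filter_upwards [hnear] with t ht
    exact ((ht.differentiableAt two_ne_zero).hasFDerivAt.comp_hasDerivAt t (hγ t)).deriv
  have hsecond : HasDerivAt (fun t => partialD j f (γ t))
      (partialD j (fun z => partialD j f z) p) 0 :=
    (hf.differentiableAt_partialD j).hasFDerivAt.comp_hasDerivAt_of_eq 0 (hγ 0) hγ0.symm
  have hmin' : IsLocalMin (f ∘ γ) 0 := (hγ0 ▸ hmin).comp_continuous (hγ 0).continuousAt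
  rw [← hsecond.deriv, ← hderiv.deriv_eq]
  exact hmin'.deriv_deriv_nonneg (hnear.mono fun t ht =>
    ((ht.differentiableAt two_ne_zero).comp t (hγ t).differentiableAt))

theorem IsLocalMin.divA_nonneg (hf : ContDiffAt ℝ 2 f p) (hmin : IsLocalMin f p) (hp : 0 < p i) :
    0 ≤ divA i a f p := by
  have hfirst : partialD i f p = 0 := by simp [partialD, hmin.fderiv_eq_zero]
  rw [divA, hfirst, mul_zero, add_zero]
  exact mul_nonneg (Real.rpow_pos_of_pos hp a).le
    (Finset.sum_nonneg fun j _ => hmin.partialD_partialD_nonneg hf j)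

theorem IsCompact.pos_of_divA_neg {K O : Set (EuclideanSpace ℝ (Fin n))} (hK : IsCompact K)
    (hO : IsOpen O) (hOK : O ⊆ K) (hf : ContinuousOn f K) (hbdry : ∀ p ∈ K \ O, 0 < f p)
    (hint : ∀ p ∈ O, 0 < p i ∧ ContDiffAt ℝ 2 f p ∧ divA i a f p < 0) (hp : p ∈ K) : 0 < f p := by
  obtain ⟨q, hqK, hqmin⟩ := hK.exists_isMinOn ⟨p, hp⟩ hf
  refine lt_of_lt_of_le ?_ (hqmin hp)
  by_cases hqO : q ∈ O
  · obtain ⟨hqi, hfq, hdiv⟩ := hint q hqO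
    have hloc := hqmin.isLocalMin (Filter.mem_of_superset (hO.mem_nhds hqO) hOK)
    exact absurd (hloc.divA_nonneg hfq hqi) hdiv.not_ge
  · exact hbdry q ⟨hqK, hqO⟩

end Operator

section Inversion

variable {lam : ℝ}

theorem sum_sub_sq_eq_norm_sq (x y : EuclideanSpace ℝ (Fin n)) :
    ∑ k, (y k - x k) ^ 2 = ‖y - x‖ ^ 2 := by
  simp [EuclideanSpace.norm_sq_eq]

theorem hasPartialDerivAt_norm_sub_sq (j : Fin n) (x y : EuclideanSpace ℝ (Fin n)) :
    HasPartialDerivAt j (fun z => ‖z - x‖ ^ 2) (2 * (y j - x j)) y := by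
  refine (((hasFDerivAt_id y).sub_const x).norm_sq).hasPartialDerivAt.congr_deriv ?_
  simp [EuclideanSpace.inner_single_right]

theorem inversion_apply (x : EuclideanSpace ℝ (Fin n)) (lam : ℝ) (y : EuclideanSpace ℝ (Fin n))
    (k : Fin n) : inversion x lam y k = x k + lam ^ 2 / ‖y - x‖ ^ 2 * (y k - x k) := by
  simp [inversion]

theorem inversion_apply_of_apply_eq_zero {i : Fin n} (hx : x i = 0) :
    inversion x lam y i = lam ^ 2 / ‖y - x‖ ^ 2 * y i := by
  rw [inversion_apply, hx, zero_add, sub_zero]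

theorem inversion_apply_pos {i : Fin n} (hx : x i = 0) (hlam : lam ≠ 0) (hyi : 0 < y i) :
    0 < inversion x lam y i := by
  have hr : ‖y - x‖ ≠ 0 := (norm_sub_pos_iff.2 (ne_of_apply_ne (· i) (hx ▸ hyi.ne'))).ne'
  rw [inversion_apply_of_apply_eq_zero hx]
  positivity

theorem inversion_apply_nonneg {i : Fin n} (hx : x i = 0) (hyi : 0 ≤ y i) : 0 ≤ inversion x lam y i := by
  rw [inversion_apply_of_apply_eq_zero hx]
  positivity

theorem inversion_eq_self_of_norm_sub_eq (hlam : lam ≠ 0) (hy : ‖y - x‖ = lam) :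
    inversion x lam y = y := by
  rw [inversion, hy, div_self (pow_ne_zero 2 hlam), one_smul, add_sub_cancel]

theorem norm_inversion_sub : ‖inversion x lam y - x‖ = lam ^ 2 / ‖y - x‖ := by
  rw [inversion, add_sub_cancel_left, norm_smul, Real.norm_of_nonneg (by positivity)]
  field_simp

theorem contDiffAt_inversion {m : WithTop ℕ∞} (hy : y ≠ x) :
    ContDiffAt ℝ m (inversion x lam) y := by
  have hq : ‖y - x‖ ^ 2 ≠ 0 := pow_ne_zero 2 (norm_sub_pos_iff.2 hy).ne'
  have hsq : ContDiffAt ℝ m (fun z => ‖z - x‖ ^ 2) y :=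
    (contDiffAt_id.sub contDiffAt_const).norm_sq ℝ
  exact contDiffAt_const.add
    ((contDiffAt_const.div hsq hq).smul (contDiffAt_id.sub contDiffAt_const))

/-- `∂ⱼ (inversion x lam)ₖ = (λ²/|y-x|²) (δⱼₖ - 2 ωⱼ ωₖ)` with `ω = (y-x)/|y-x|`: a multiple of a
reflection, which is why the inversion is conformal. -/
noncomputable def inversionJac (x : EuclideanSpace ℝ (Fin n)) (lam : ℝ) (j k : Fin n)
    (y : EuclideanSpace ℝ (Fin n)) : ℝ :=
  lam ^ 2 / ‖y - x‖ ^ 2 * ((if j = k then 1 else 0) - 2 * (y j - x j) * (y k - x k) / ‖y - x‖ ^ 2)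

theorem inversionJac_comm (j k : Fin n) :
    inversionJac x lam j k y = inversionJac x lam k j y := by
  simp only [inversionJac, eq_comm (a := j)]
  ring

theorem hasPartialDerivAt_inversion_apply (hy : y ≠ x) (j k : Fin n) :
    HasPartialDerivAt j (fun z => inversion x lam z k) (inversionJac x lam j k y) y := by
  have hr : ‖y - x‖ ≠ 0 := (norm_sub_pos_iff.2 hy).ne'
  have hq : ‖y - x‖ ^ 2 ≠ 0 := pow_ne_zero 2 hr
  have h := (hasPartialDerivAt_const j (x k) y).add
    ((((hasPartialDerivAt_norm_sub_sq j x y).inv hq).const_mul (lam ^ 2)).mul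
      (hasPartialDerivAt_sub_apply j k x y))
  refine (h.congr_of_eventuallyEq (.of_forall fun z => ?_)).congr_deriv ?_
  · simp [inversion_apply, div_eq_mul_inv]
  · simp only [inversionJac]
    field_simp
    ring

theorem hasPartialDerivAt_comp_inversion {f : EuclideanSpace ℝ (Fin n) → ℝ} (hy : y ≠ x)
    (hf : DifferentiableAt ℝ f (inversion x lam y)) (j : Fin n) :
    HasPartialDerivAt j (fun z => f (inversion x lam z))
      (∑ k, inversionJac x lam j k y * partialD k f (inversion x lam y)) y :=
  hasPartialDerivAt_comp hf ((contDiffAt_inversion (m := 1) hy).differentiableAt one_ne_zero)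
    (hasPartialDerivAt_inversion_apply hy j)

theorem sum_inversionJac_mul (j : Fin n) (c : Fin n → ℝ) :
    ∑ k, inversionJac x lam j k y * c k
      = lam ^ 2 / ‖y - x‖ ^ 2 * (c j - 2 * (y j - x j) / ‖y - x‖ ^ 2 * ∑ k, (y k - x k) * c k) := by
  calc ∑ k, inversionJac x lam j k y * c k
      = ∑ k, (lam ^ 2 / ‖y - x‖ ^ 2 * (if j = k then c k else 0)
          - lam ^ 2 / ‖y - x‖ ^ 2 * (2 * (y j - x j) / ‖y - x‖ ^ 2) * ((y k - x k) * c k)) := by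
        refine Finset.sum_congr rfl fun k _ => ?_
        simp only [inversionJac]
        split_ifs <;> ring
    _ = _ := by
        rw [Finset.sum_sub_distrib, ← Finset.mul_sum, ← Finset.mul_sum, Finset.sum_ite_eq]
        simp only [Finset.mem_univ, if_true]
        ring

theorem sum_inversionJac_mul_sub (hy : y ≠ x) (k : Fin n) :
    ∑ j, inversionJac x lam k j y * (y j - x j) = -(lam ^ 2 / ‖y - x‖ ^ 2) * (y k - x k) := by
  have hr : ‖y - x‖ ≠ 0 := (norm_sub_pos_iff.2 hy).ne'
  rw [sum_inversionJac_mul]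
  simp only [← sq, sum_sub_sq_eq_norm_sq]
  field_simp
  ring

theorem sum_inversionJac_mul_inversionJac (hy : y ≠ x) (k l : Fin n) :
    ∑ j, inversionJac x lam j k y * inversionJac x lam j l y
      = (lam ^ 2 / ‖y - x‖ ^ 2) ^ 2 * (if k = l then 1 else 0) := by
  have hr : ‖y - x‖ ≠ 0 := (norm_sub_pos_iff.2 hy).ne'
  have hcol : ∑ j, (y j - x j) * inversionJac x lam j l y
      = -(lam ^ 2 / ‖y - x‖ ^ 2) * (y l - x l) := by
    simp only [mul_comm (y _ - x _), inversionJac_comm _ l, sum_inversionJac_mul_sub hy]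
  simp only [inversionJac_comm _ k]
  rw [sum_inversionJac_mul, hcol]
  simp only [inversionJac]
  split_ifs <;> field_simp <;> ring

/-- `∂ⱼ (inversionJac x lam j k)`: only these derivatives enter the Laplacian. -/
noncomputable def inversionJacDeriv (x : EuclideanSpace ℝ (Fin n)) (lam : ℝ) (j k : Fin n)
    (y : EuclideanSpace ℝ (Fin n)) : ℝ :=
  -2 * lam ^ 2 * ((y k - x k) + 2 * (if j = k then 1 else 0) * (y j - x j)) / ‖y - x‖ ^ 4
    + 8 * lam ^ 2 * (y j - x j) ^ 2 * (y k - x k) / ‖y - x‖ ^ 6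

theorem hasPartialDerivAt_inversionJac (hy : y ≠ x) (j k : Fin n) :
    HasPartialDerivAt j (inversionJac x lam j k) (inversionJacDeriv x lam j k y) y := by
  have hr : ‖y - x‖ ≠ 0 := (norm_sub_pos_iff.2 hy).ne'
  have hq : ‖y - x‖ ^ 2 ≠ 0 := pow_ne_zero 2 hr
  have hinv := (hasPartialDerivAt_norm_sub_sq j x y).inv hq
  have hj := hasPartialDerivAt_sub_apply j j x y
  have hk := hasPartialDerivAt_sub_apply j k x y
  have h := (hinv.const_mul (lam ^ 2)).mul
    ((hasPartialDerivAt_const j (if j = k then 1 else 0) y).add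
      (((hj.const_mul (-2)).mul hk).mul hinv))
  refine (h.congr_of_eventuallyEq (.of_forall fun z => ?_)).congr_deriv ?_
  · simp only [inversionJac]
    ring
  · simp only [inversionJacDeriv]
    split_ifs <;> field_simp <;> ring

theorem sum_inversionJacDeriv (k : Fin n) :
    ∑ j, inversionJacDeriv x lam j k y = (4 - 2 * n) * lam ^ 2 / ‖y - x‖ ^ 4 * (y k - x k) := by
  calc ∑ j, inversionJacDeriv x lam j k y
      = ∑ j, (-2 * lam ^ 2 * (y k - x k) / ‖y - x‖ ^ 4
          - 4 * lam ^ 2 / ‖y - x‖ ^ 4 * (if j = k then y j - x j else 0)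
          + 8 * lam ^ 2 * (y k - x k) / ‖y - x‖ ^ 6 * (y j - x j) ^ 2) := by
        refine Finset.sum_congr rfl fun j _ => ?_
        simp only [inversionJacDeriv]
        split_ifs <;> ring
    _ = _ := by
        rw [Finset.sum_add_distrib, Finset.sum_sub_distrib, ← Finset.mul_sum, ← Finset.mul_sum,
          Finset.sum_ite_eq', sum_sub_sq_eq_norm_sq]
        simp only [Finset.sum_const, Finset.card_univ, Fintype.card_fin, nsmul_eq_mul,
          Finset.mem_univ, if_true]
        field_simp
        ring

theorem sum_sub_mul_sum_inversionJac_mul (hy : y ≠ x) (c : Fin n → ℝ) :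
    ∑ j, (y j - x j) * ∑ k, inversionJac x lam j k y * c k
      = -(lam ^ 2 / ‖y - x‖ ^ 2) * ∑ k, (y k - x k) * c k := by
  simp only [Finset.mul_sum, ← mul_assoc]
  rw [Finset.sum_comm]
  simp only [← Finset.sum_mul, mul_comm (y _ - x _), inversionJac_comm _ (k := _),
    sum_inversionJac_mul_sub hy]

theorem sum_sum_inversionJacDeriv_mul (c : Fin n → ℝ) :
    ∑ j, ∑ k, inversionJacDeriv x lam j k y * c k
      = (4 - 2 * n) * lam ^ 2 / ‖y - x‖ ^ 4 * ∑ k, (y k - x k) * c k := by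
  rw [Finset.sum_comm, Finset.mul_sum]
  simp only [← Finset.sum_mul, sum_inversionJacDeriv, mul_assoc]

theorem sum_sum_inversionJac_mul_sum_inversionJac_mul (hy : y ≠ x) (H : Fin n → Fin n → ℝ) :
    ∑ j, ∑ k, inversionJac x lam j k y * ∑ l, inversionJac x lam j l y * H k l
      = (lam ^ 2 / ‖y - x‖ ^ 2) ^ 2 * ∑ k, H k k := by
  simp only [Finset.mul_sum, ← mul_assoc]
  rw [Finset.sum_comm]
  refine Finset.sum_congr rfl fun k _ => ?_
  rw [Finset.sum_comm]
  simp only [← Finset.sum_mul, sum_inversionJac_mul_inversionJac hy, mul_ite, mul_one, mul_zero,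
    ite_mul, zero_mul, Finset.sum_ite_eq, Finset.mem_univ, if_true]

end Inversion

section KelvinPow

variable {lam e : ℝ} {u : EuclideanSpace ℝ (Fin n) → ℝ}

noncomputable def kelvinPow (x : EuclideanSpace ℝ (Fin n)) (lam e : ℝ)
    (u : EuclideanSpace ℝ (Fin n) → ℝ) (y : EuclideanSpace ℝ (Fin n)) : ℝ :=
  (‖y - x‖ ^ 2) ^ e * u (inversion x lam y)

noncomputable def kelvinPowPartial (x : EuclideanSpace ℝ (Fin n)) (lam e : ℝ)
    (u : EuclideanSpace ℝ (Fin n) → ℝ) (j : Fin n) (y : EuclideanSpace ℝ (Fin n)) : ℝ :=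
  (‖y - x‖ ^ 2) ^ e * (2 * e * (y j - x j) / ‖y - x‖ ^ 2 * u (inversion x lam y)
    + ∑ k, inversionJac x lam j k y * partialD k u (inversion x lam y))

theorem hasPartialDerivAt_rpow_norm_sub_sq (hy : y ≠ x) (j : Fin n) (e : ℝ) :
    HasPartialDerivAt j (fun z => (‖z - x‖ ^ 2) ^ e)
      ((‖y - x‖ ^ 2) ^ e * (2 * e * (y j - x j) / ‖y - x‖ ^ 2)) y := by
  have hq : ‖y - x‖ ^ 2 ≠ 0 := pow_ne_zero 2 ((norm_sub_pos_iff.2 hy).ne')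
  refine ((hasPartialDerivAt_norm_sub_sq j x y).rpow_const hq e).congr_deriv ?_
  rw [Real.rpow_sub_one hq]
  field_simp

theorem hasPartialDerivAt_kelvinPow (hy : y ≠ x) (hu : DifferentiableAt ℝ u (inversion x lam y))
    (j : Fin n) :
    HasPartialDerivAt j (kelvinPow x lam e u) (kelvinPowPartial x lam e u j y) y := by
  refine ((hasPartialDerivAt_rpow_norm_sub_sq hy j e).mul
    (hasPartialDerivAt_comp_inversion hy hu j)).congr_deriv ?_
  simp only [kelvinPowPartial]
  ring

theorem partialD_partialD_kelvinPow (hy : y ≠ x) (hu : ContDiffAt ℝ 2 u (inversion x lam y))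
    (j : Fin n) :
    partialD j (fun z => partialD j (kelvinPow x lam e u) z) y
      = (‖y - x‖ ^ 2) ^ e * (2 * e * (y j - x j) / ‖y - x‖ ^ 2
            * (2 * e * (y j - x j) / ‖y - x‖ ^ 2 * u (inversion x lam y)
              + ∑ k, inversionJac x lam j k y * partialD k u (inversion x lam y))
          + (2 * e / ‖y - x‖ ^ 2 - 4 * e * (y j - x j) ^ 2 / ‖y - x‖ ^ 4) * u (inversion x lam y)
          + 2 * e * (y j - x j) / ‖y - x‖ ^ 2
            * ∑ k, inversionJac x lam j k y * partialD k u (inversion x lam y)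
          + ∑ k, (inversionJacDeriv x lam j k y * partialD k u (inversion x lam y)
            + inversionJac x lam j k y * ∑ l, inversionJac x lam j l y
              * partialD l (fun z => partialD k u z) (inversion x lam y))) := by
  have hr : ‖y - x‖ ≠ 0 := (norm_sub_pos_iff.2 hy).ne'
  have hq : ‖y - x‖ ^ 2 ≠ 0 := pow_ne_zero 2 hr
  have hnear : ∀ᶠ z in 𝓝 y, z ≠ x ∧ DifferentiableAt ℝ u (inversion x lam z) := by
    have h := (contDiffAt_inversion (m := 0) (lam := lam) hy).continuousAt.eventually
      (hu.eventually (by simp))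
    filter_upwards [isOpen_ne.mem_nhds hy, h] with z hzx hz
    exact ⟨hzx, hz.differentiableAt two_ne_zero⟩
  have hfirst :
      kelvinPowPartial x lam e u j =ᶠ[𝓝 y] fun z => partialD j (kelvinPow x lam e u) z := by
    filter_upwards [hnear] with z hz
    exact (hasPartialDerivAt_kelvinPow hz.1 hz.2 j).partialD_eq.symm
  have hD : HasPartialDerivAt j (fun z => 2 * e * (z j - x j) / ‖z - x‖ ^ 2)
      (2 * e / ‖y - x‖ ^ 2 - 4 * e * (y j - x j) ^ 2 / ‖y - x‖ ^ 4) y := by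
    refine ((((hasPartialDerivAt_sub_apply j j x y).const_mul (2 * e)).mul
      ((hasPartialDerivAt_norm_sub_sq j x y).inv hq)).congr_of_eventuallyEq
      (.of_forall fun z => by simp only [div_eq_mul_inv])).congr_deriv ?_
    simp only [↓reduceIte]
    field_simp
    ring
  have hU := hasPartialDerivAt_comp_inversion hy (hu.differentiableAt two_ne_zero) j
  have hUk := fun k => hasPartialDerivAt_comp_inversion hy (hu.differentiableAt_partialD k) j
  have hJ := hasPartialDerivAt_inversionJac (lam := lam) hy j
  have h := (hasPartialDerivAt_rpow_norm_sub_sq hy j e).mul ((hD.mul hU).add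
    (HasPartialDerivAt.sum (s := Finset.univ) fun k _ => (hJ k).mul (hUk k)))
  refine ((h.congr_of_eventuallyEq ?_).congr_of_eventuallyEq hfirst).partialD_eq.trans ?_
  · exact .of_forall fun z => rfl
  · ring

theorem lapl_kelvinPow (hy : y ≠ x) (hu : ContDiffAt ℝ 2 u (inversion x lam y)) :
    lapl (kelvinPow x lam e u) y
      = (‖y - x‖ ^ 2) ^ e * ((4 * e ^ 2 - 4 * e + 2 * n * e) / ‖y - x‖ ^ 2 * u (inversion x lam y)
        + (4 - 4 * e - 2 * n) * lam ^ 2 / ‖y - x‖ ^ 4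
          * ∑ k, (y k - x k) * partialD k u (inversion x lam y)
        + lam ^ 4 / ‖y - x‖ ^ 4 * lapl u (inversion x lam y)) := by
  have hr : ‖y - x‖ ≠ 0 := (norm_sub_pos_iff.2 hy).ne'
  set U := u (inversion x lam y)
  set Uk := fun k => partialD k u (inversion x lam y)
  set Ukl := fun k l => partialD l (fun z => partialD k u z) (inversion x lam y)
  rw [lapl, Finset.sum_congr rfl fun j _ => partialD_partialD_kelvinPow hy hu j, ← Finset.mul_sum]
  congr 1
  calc _ = ∑ j, ((4 * e ^ 2 - 4 * e) * U / ‖y - x‖ ^ 4 * (y j - x j) ^ 2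
          + 2 * e * U / ‖y - x‖ ^ 2
          + 4 * e / ‖y - x‖ ^ 2 * ((y j - x j) * ∑ k, inversionJac x lam j k y * Uk k)
          + ∑ k, inversionJacDeriv x lam j k y * Uk k
          + ∑ k, inversionJac x lam j k y * ∑ l, inversionJac x lam j l y * Ukl k l) := by
        refine Finset.sum_congr rfl fun j _ => ?_
        rw [Finset.sum_add_distrib]
        field_simp
        ring
    _ = _ := by
        simp only [Finset.sum_add_distrib, ← Finset.mul_sum, Finset.sum_const, Finset.card_univ,
          Fintype.card_fin, nsmul_eq_mul, sum_sub_sq_eq_norm_sq,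
          sum_sub_mul_sum_inversionJac_mul hy, sum_sum_inversionJacDeriv_mul,
          sum_sum_inversionJac_mul_sum_inversionJac_mul hy]
        simp only [lapl, Ukl]
        field_simp
        ring

theorem divA_kelvinPow {i : Fin n} {a : ℝ} (hu : ContDiffAt ℝ 2 u (inversion x lam y))
    (hdiv : divA i a u (inversion x lam y) = 0) (hx : x i = 0) (hlam : lam ≠ 0) (hyi : 0 < y i) :
    divA i a (kelvinPow x lam e u) y
      = (2 * e + n - 2 + a) * (y i ^ a * (‖y - x‖ ^ 2) ^ e)
        * (2 * e / ‖y - x‖ ^ 2 * u (inversion x lam y)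
          - 2 * lam ^ 2 / ‖y - x‖ ^ 4 * ∑ k, (y k - x k) * partialD k u (inversion x lam y)) := by
  have hy : y ≠ x := ne_of_apply_ne (· i) (hx ▸ hyi.ne')
  have hr : ‖y - x‖ ≠ 0 := (norm_sub_pos_iff.2 hy).ne'
  rw [divA, lapl_kelvinPow hy hu, (hasPartialDerivAt_kelvinPow hy (hu.differentiableAt two_ne_zero)
    i).partialD_eq, kelvinPowPartial, sum_inversionJac_mul,
    lapl_eq_of_divA_eq_zero (inversion_apply_pos hx hlam hyi) hdiv,
    inversion_apply_of_apply_eq_zero hx, Real.rpow_sub_one hyi.ne', hx]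
  field_simp
  ring

end KelvinPow

section Kelvin

variable {i : Fin n} {a lam e : ℝ} {u : EuclideanSpace ℝ (Fin n) → ℝ}

theorem contDiffAt_kelvinPow {m : WithTop ℕ∞} (hy : y ≠ x)
    (hu : ContDiffAt ℝ m u (inversion x lam y)) : ContDiffAt ℝ m (kelvinPow x lam e u) y := by
  have hq : ‖y - x‖ ^ 2 ≠ 0 := pow_ne_zero 2 ((norm_sub_pos_iff.2 hy).ne')
  exact ((contDiffAt_id.sub contDiffAt_const).norm_sq ℝ |>.rpow_const_of_ne hq).mul
    (hu.comp y (contDiffAt_inversion hy))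

theorem divA_rpow_norm_sub_sq (hx : x i = 0) (hyi : 0 < y i) :
    divA i a (fun z => (‖z - x‖ ^ 2) ^ e) y
      = 2 * e * (2 * e + n - 2 + a) * (y i ^ a * (‖y - x‖ ^ 2) ^ e) / ‖y - x‖ ^ 2 := by
  have h := divA_kelvinPow (u := fun _ => 1) (lam := 1) (e := e) (a := a) contDiffAt_const
    (divA_const 1) hx one_ne_zero hyi
  have hfun : kelvinPow x 1 e (fun _ => 1) = fun z => (‖z - x‖ ^ 2) ^ e := by
    funext z
    rw [kelvinPow, mul_one]
  have hpartial : ∀ k w, partialD k (fun _ : EuclideanSpace ℝ (Fin n) => (1 : ℝ)) w = 0 := by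
    simp [partialD]
  simp only [hfun, hpartial, mul_zero, Finset.sum_const_zero, sub_zero] at h
  rw [h]
  ring

theorem kelvin_eq_kelvinPow (hlam : 0 ≤ lam) :
    kelvin a x lam u
      = fun y => lam ^ ((n : ℝ) - 2 + a) * kelvinPow x lam (-(((n : ℝ) - 2 + a) / 2)) u y := by
  funext y
  have hpow : (‖y - x‖ ^ 2) ^ (-(((n : ℝ) - 2 + a) / 2)) = (‖y - x‖ ^ ((n : ℝ) - 2 + a))⁻¹ := by
    rw [← Real.rpow_natCast, ← Real.rpow_mul (norm_nonneg _), ← Real.rpow_neg (norm_nonneg _)]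
    push_cast
    ring_nf
  rw [kelvin, kelvinPow, Real.div_rpow hlam (norm_nonneg _), hpow]
  ring

theorem contDiffAt_kelvin (hlam : 0 ≤ lam) (hy : y ≠ x)
    (hu : ContDiffAt ℝ 2 u (inversion x lam y)) : ContDiffAt ℝ 2 (kelvin a x lam u) y := by
  rw [kelvin_eq_kelvinPow hlam]
  exact contDiffAt_const.mul (contDiffAt_kelvinPow hy hu)

theorem divA_kelvin (hlam : 0 < lam) (hu : ContDiffAt ℝ 2 u (inversion x lam y))
    (hdiv : divA i a u (inversion x lam y) = 0) (hx : x i = 0) (hyi : 0 < y i) :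
    divA i a (kelvin a x lam u) y = 0 := by
  have hy : y ≠ x := ne_of_apply_ne (· i) (hx ▸ hyi.ne')
  have h := divA_add_const_mul (i := i) (a := a) (f := fun _ => 0) contDiffAt_const
    (contDiffAt_kelvinPow (e := -(((n : ℝ) - 2 + a) / 2)) hy hu) (lam ^ ((n : ℝ) - 2 + a))
  rw [kelvin_eq_kelvinPow hlam.le]
  simp only [zero_add, divA_const] at h
  rw [h, divA_kelvinPow hu hdiv hx hlam.ne' hyi]
  ring

theorem divA_rpow_norm_sub_sq_neg (hs : 0 < (n : ℝ) - 2 + a) (hx : x i = 0) (hyi : 0 < y i) :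
    divA i a (fun z => (‖z - x‖ ^ 2) ^ (-(((n : ℝ) - 2 + a) / 4))) y < 0 := by
  have hy : y ≠ x := ne_of_apply_ne (· i) (hx ▸ hyi.ne')
  have hr : 0 < ‖y - x‖ := norm_sub_pos_iff.2 hy
  rw [divA_rpow_norm_sub_sq hx hyi]
  have hpos : 0 < y i ^ a * (‖y - x‖ ^ 2) ^ (-(((n : ℝ) - 2 + a) / 4)) := by positivity
  have hcoef : 2 * -(((n : ℝ) - 2 + a) / 4) * (2 * -(((n : ℝ) - 2 + a) / 4) + n - 2 + a) < 0 := by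
    nlinarith
  exact div_neg_of_neg_of_pos (mul_neg_of_neg_of_pos hcoef hpos) (by positivity)

theorem kelvin_eq_self_of_norm_sub_eq (hlam : 0 < lam) (hy : ‖y - x‖ = lam) :
    kelvin a x lam u y = u y := by
  rw [kelvin, inversion_eq_self_of_norm_sub_eq hlam.ne' hy, hy, div_self hlam.ne', Real.one_rpow,
    one_mul]

theorem kelvin_le_one (hx : x i = 0) (hbdry : ∀ w : EuclideanSpace ℝ (Fin n), w i = 0 → u w = 1)
    (hs : 0 ≤ (n : ℝ) - 2 + a) (hlam : 0 < lam) (hyi : y i = 0) (hyl : lam ≤ ‖y - x‖) :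
    kelvin a x lam u y ≤ 1 := by
  rw [kelvin, hbdry _ (by rw [inversion_apply_of_apply_eq_zero hx, hyi, mul_zero]), mul_one]
  exact Real.rpow_le_one (by positivity) ((div_le_one (hlam.trans_le hyl)).2 hyl) hs

theorem continuousOn_kelvin (hs : 0 ≤ (n : ℝ) - 2 + a) (hx : x i = 0)
    (hu : ContinuousOn u {w | 0 ≤ w i}) :
    ContinuousOn (kelvin a x lam u) {z | z ≠ x ∧ 0 ≤ z i} := by
  have hnorm : ContinuousOn (fun z => ‖z - x‖) {z | z ≠ x ∧ 0 ≤ z i} := by fun_prop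
  refine ((continuousOn_const.div hnorm fun z hz => ?_).rpow_const fun _ _ => Or.inr hs).mul
    (hu.comp (fun z hz => (contDiffAt_inversion (m := 0) hz.1).continuousAt.continuousWithinAt)
      fun z hz => inversion_apply_nonneg hx hz.2)
  exact (norm_sub_pos_iff.2 hz.1).ne'

theorem exists_forall_kelvin_lt (hs : 0 < (n : ℝ) - 2 + a) (hx : x i = 0) (hlam : 0 ≤ lam)
    (hu : ContinuousWithinAt u {w | 0 ≤ w i} x) {ε : ℝ} (hε : 0 < ε) :
    ∃ R, ∀ z : EuclideanSpace ℝ (Fin n), 0 ≤ z i → R ≤ ‖z - x‖ → kelvin a x lam u z < ε := by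
  obtain ⟨δ, hδ, hnear⟩ := Metric.continuousWithinAt_iff.1 hu 1 one_pos
  set M := |u x| + 1
  have hM : 0 < M := by positivity
  have hbound : ∀ w, 0 ≤ w i → dist w x < δ → u w < M := fun w hw hwx => by
    have := hnear hw hwx
    rw [Real.dist_eq] at this
    linarith [le_abs_self (u x), (abs_lt.1 this).2]
  have hlim : Tendsto (fun r : ℝ => (lam / r) ^ ((n : ℝ) - 2 + a)) atTop (𝓝 0) := by
    have h := (Real.continuousAt_rpow_const 0 _ (Or.inr hs.le)).tendsto.comp
      (tendsto_const_nhds.div_atTop tendsto_id : Tendsto (fun r : ℝ => lam / r) atTop (𝓝 0))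
    rwa [Real.zero_rpow hs.ne'] at h
  obtain ⟨R, hR⟩ := eventually_atTop.1 ((hlim.eventually (gt_mem_nhds (div_pos hε hM))).and
    ((eventually_gt_atTop (lam ^ 2 / δ)).and (eventually_gt_atTop 0)))
  refine ⟨R, fun z hzi hzR => ?_⟩
  obtain ⟨hsmall, hfar, hpos⟩ := hR _ hzR
  have hzx : z ≠ x := fun h => by simp [h] at hpos
  have hclose : dist (inversion x lam z) x < δ := by
    rw [dist_eq_norm, norm_inversion_sub, div_lt_iff₀ hpos]
    rwa [div_lt_iff₀ hδ, mul_comm] at hfar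
  calc kelvin a x lam u z ≤ (lam / ‖z - x‖) ^ ((n : ℝ) - 2 + a) * M :=
        mul_le_mul_of_nonneg_left (hbound _ (inversion_apply_nonneg hx hzi) hclose).le
          (by positivity)
    _ < ε / M * M := mul_lt_mul_of_pos_right hsmall hM
    _ = ε := div_mul_cancel₀ ε hM.ne'

end Kelvin

section MovingSphere

variable {i : Fin n} {a lam : ℝ} {u : EuclideanSpace ℝ (Fin n) → ℝ}

theorem kelvin_le_of_not_mem_interior (hs : 0 ≤ (n : ℝ) - 2 + a) (hx : x i = 0) (hlam : 0 < lam)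
    (hlow : ∀ w : EuclideanSpace ℝ (Fin n), 0 < w i → 1 / 2 < u w)
    (hbdry : ∀ w : EuclideanSpace ℝ (Fin n), w i = 0 → u w = 1) {R : ℝ}
    (hR : ∀ z : EuclideanSpace ℝ (Fin n), 0 ≤ z i → R ≤ ‖z - x‖ → kelvin a x lam u z < 1 / 2)
    (hyi : 0 ≤ y i) (hyl : lam ≤ ‖y - x‖) (hy : ¬(0 < y i ∧ lam < ‖y - x‖ ∧ ‖y - x‖ < R)) :
    kelvin a x lam u y ≤ u y := by
  rcases hyi.eq_or_lt with hyi | hyi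
  · rw [hbdry y hyi.symm]
    exact kelvin_le_one hx hbdry hs hlam hyi.symm hyl
  rcases hyl.eq_or_lt with hyl | hyl
  · exact (kelvin_eq_self_of_norm_sub_eq hlam hyl.symm).le
  · have hyR : R ≤ ‖y - x‖ := by
      by_contra! h
      exact hy ⟨hyi, hyl, h⟩
    linarith [hR y hyi.le hyR, hlow y hyi]

theorem divA_sub_kelvin_add_mul_rpow_neg (hs : 0 < (n : ℝ) - 2 + a)
    (hu2 : ContDiffOn ℝ 2 u {y | 0 < y i}) (heq : ∀ y, 0 < y i → divA i a u y = 0)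
    (hx : x i = 0) (hlam : 0 < lam) {ε : ℝ} (hε : 0 < ε) (hyi : 0 < y i) :
    ContDiffAt ℝ 2 (fun z => u z - kelvin a x lam u z
        + ε * (‖z - x‖ ^ 2) ^ (-(((n : ℝ) - 2 + a) / 4))) y
      ∧ divA i a (fun z => u z - kelvin a x lam u z
        + ε * (‖z - x‖ ^ 2) ^ (-(((n : ℝ) - 2 + a) / 4))) y < 0 := by
  have hy : y ≠ x := ne_of_apply_ne (· i) (hx ▸ hyi.ne')
  have hopen : IsOpen {w : EuclideanSpace ℝ (Fin n) | 0 < w i} :=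
    isOpen_lt continuous_const (by fun_prop)
  have hyi' := inversion_apply_pos hx hlam.ne' hyi
  have hu : ContDiffAt ℝ 2 u y := hu2.contDiffAt (hopen.mem_nhds hyi)
  have hui : ContDiffAt ℝ 2 u (inversion x lam y) := hu2.contDiffAt (hopen.mem_nhds hyi')
  have hk : ContDiffAt ℝ 2 (kelvin a x lam u) y := contDiffAt_kelvin hlam.le hy hui
  have hg : ContDiffAt ℝ 2 (fun z => (‖z - x‖ ^ 2) ^ (-(((n : ℝ) - 2 + a) / 4))) y :=
    ((contDiffAt_id.sub contDiffAt_const).norm_sq ℝ).rpow_const_of_ne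
      (pow_ne_zero 2 (norm_sub_pos_iff.2 hy).ne')
  have hsub : ContDiffAt ℝ 2 (fun z => u z + -1 * kelvin a x lam u z) y :=
    hu.add (contDiffAt_const.mul hk)
  have hφ : (fun z => u z - kelvin a x lam u z + ε * (‖z - x‖ ^ 2) ^ (-(((n : ℝ) - 2 + a) / 4)))
      = fun z => u z + -1 * kelvin a x lam u z
        + ε * (‖z - x‖ ^ 2) ^ (-(((n : ℝ) - 2 + a) / 4)) := by
    funext z
    ring
  rw [hφ]
  refine ⟨hsub.add (contDiffAt_const.mul hg), ?_⟩
  rw [divA_add_const_mul hsub hg, divA_add_const_mul hu hk, heq y hyi,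
    divA_kelvin hlam hui (heq _ hyi') hx hyi]
  nlinarith [divA_rpow_norm_sub_sq_neg hs hx hyi (a := a) (i := i)]

theorem kelvin_lt_add_mul_rpow (hs : 0 < (n : ℝ) - 2 + a)
    (hu2 : ContDiffOn ℝ 2 u {y | 0 < y i}) (hu0 : ContinuousOn u {y | 0 ≤ y i})
    (heq : ∀ y, 0 < y i → divA i a u y = 0)
    (hlow : ∀ y : EuclideanSpace ℝ (Fin n), 0 < y i → 1 / 2 < u y)
    (hbdry : ∀ y : EuclideanSpace ℝ (Fin n), y i = 0 → u y = 1) (hx : x i = 0) (hlam : 0 < lam)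
    {R : ℝ}
    (hR : ∀ z : EuclideanSpace ℝ (Fin n), 0 ≤ z i → R ≤ ‖z - x‖ → kelvin a x lam u z < 1 / 2)
    {ε : ℝ} (hε : 0 < ε) (hyi : 0 ≤ y i) (hyl : lam ≤ ‖y - x‖) (hyR : ‖y - x‖ ≤ R) :
    kelvin a x lam u y < u y + ε * (‖y - x‖ ^ 2) ^ (-(((n : ℝ) - 2 + a) / 4)) := by
  set K := {z : EuclideanSpace ℝ (Fin n) | 0 ≤ z i ∧ lam ≤ ‖z - x‖ ∧ ‖z - x‖ ≤ R}
  set O := {z : EuclideanSpace ℝ (Fin n) | 0 < z i ∧ lam < ‖z - x‖ ∧ ‖z - x‖ < R}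
  have hKx : ∀ z ∈ K, z ≠ x := by
    rintro z ⟨-, hzl, -⟩ rfl
    rw [sub_self, norm_zero] at hzl
    linarith
  have hg : ∀ z ∈ K, 0 < (‖z - x‖ ^ 2) ^ (-(((n : ℝ) - 2 + a) / 4)) := fun z hz =>
    Real.rpow_pos_of_pos (pow_pos (norm_sub_pos_iff.2 (hKx z hz)) 2) _
  have hci : Continuous fun z : EuclideanSpace ℝ (Fin n) => z i := by fun_prop
  have hcr : Continuous fun z : EuclideanSpace ℝ (Fin n) => ‖z - x‖ := by fun_prop
  have hK : IsCompact K := (isCompact_closedBall x R).of_isClosed_subset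
    ((isClosed_le continuous_const hci).inter ((isClosed_le continuous_const hcr).inter
      (isClosed_le hcr continuous_const)))
    fun z hz => by simpa [dist_eq_norm] using hz.2.2
  have hO : IsOpen O := (isOpen_lt continuous_const hci).inter ((isOpen_lt continuous_const
    hcr).inter (isOpen_lt hcr continuous_const))
  have hcont : ContinuousOn (fun z => u z - kelvin a x lam u z
      + ε * (‖z - x‖ ^ 2) ^ (-(((n : ℝ) - 2 + a) / 4))) K := by
    refine ((hu0.mono fun z hz => hz.1).sub ((continuousOn_kelvin hs.le hx hu0).mono
      fun z hz => ⟨hKx z hz, hz.1⟩)).add (continuousOn_const.mul ?_)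
    exact ContinuousOn.rpow_const (by fun_prop) fun z hz =>
      Or.inl (pow_ne_zero 2 (norm_sub_pos_iff.2 (hKx z hz)).ne')
  have hpos := hK.pos_of_divA_neg (i := i) (a := a) hO
    (fun z hz => ⟨hz.1.le, hz.2.1.le, hz.2.2.le⟩) hcont
    (fun z hz => by
      linarith [kelvin_le_of_not_mem_interior hs.le hx hlam hlow hbdry hR hz.1.1 hz.1.2.1 hz.2,
        mul_pos hε (hg z hz.1)])
    (fun z hz => ⟨hz.1, divA_sub_kelvin_add_mul_rpow_neg hs hu2 heq hx hlam hε hz.1⟩)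
    ⟨hyi, hyl, hyR⟩
  linarith

end MovingSphere

theorem moving_sphere_case1_general (n : ℕ) (a : ℝ) (ha : 2 - (n : ℝ) < a)
    (i : Fin n)
    (u : EuclideanSpace ℝ (Fin n) → ℝ)
    (hu2 : ContDiffOn ℝ 2 u {y | 0 < y i})
    (hu0 : ContinuousOn u {y | 0 ≤ y i})
    (heq : ∀ y, 0 < y i → divA i a u y = 0)
    (hlow : ∀ y : EuclideanSpace ℝ (Fin n), 0 < y i → 1 / 2 < u y)
    (hbdry : ∀ y : EuclideanSpace ℝ (Fin n), y i = 0 → u y = 1) :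
    ∀ x : EuclideanSpace ℝ (Fin n), x i = 0 → ∀ lam : ℝ, 0 < lam →
      ∀ y : EuclideanSpace ℝ (Fin n), 0 < y i → lam ≤ ‖y - x‖ →
        kelvin a x lam u y ≤ u y := by
  intro x hx lam hlam y hyi hyl
  have hs : 0 < (n : ℝ) - 2 + a := by linarith
  obtain ⟨R, hR⟩ := exists_forall_kelvin_lt hs hx hlam.le (hu0 x hx.ge) one_half_pos
  have hg : 0 < (‖y - x‖ ^ 2) ^ (-(((n : ℝ) - 2 + a) / 4)) := by
    have : 0 < ‖y - x‖ := hlam.trans_le hyl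
    positivity
  refine le_of_forall_pos_lt_add fun δ hδ => ?_
  have h := kelvin_lt_add_mul_rpow hs hu2 hu0 heq hlow hbdry hx hlam (R := max R ‖y - x‖)
    (fun z hzi hzR => hR z hzi ((le_max_left _ _).trans hzR)) (div_pos hδ hg) hyi.le hyl
    (le_max_right _ _)
  rwa [div_mul_cancel₀ δ hg.ne'] at h

/-- **Lemma 3.2 (moving sphere, case `a > 2-n`).** Under the hypotheses of Theorem 3.1,
for every `x ∈ ∂ℝⁿ₊` and `λ > 0` one has `u_{x,λ}(y) ≤ u(y)` for all
`y ∈ ℝⁿ₊ \ B_λ(x)`. -/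
theorem moving_sphere_case1 (n : ℕ) (hn : 2 ≤ n) (a : ℝ) (ha : 2 - (n : ℝ) < a)
    (i : Fin n) (hi : (i : ℕ) = n - 1)
    (u : EuclideanSpace ℝ (Fin n) → ℝ)
    (hu2 : ContDiffOn ℝ 2 u {y | 0 < y i})
    (hu0 : ContinuousOn u {y | 0 ≤ y i})
    (heq : ∀ y, 0 < y i → divA i a u y = 0)
    (hlow : ∀ y : EuclideanSpace ℝ (Fin n), 0 < y i → 1 / 2 < u y)
    (hbdry : ∀ y : EuclideanSpace ℝ (Fin n), y i = 0 → u y = 1) :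
    ∀ x : EuclideanSpace ℝ (Fin n), x i = 0 → ∀ lam : ℝ, 0 < lam →
      ∀ y : EuclideanSpace ℝ (Fin n), 0 < y i → lam ≤ ‖y - x‖ →
        kelvin a x lam u y ≤ u y :=
  moving_sphere_case1_general n a ha i u hu2 hu0 heq hlow hbdry
end

section
/- Let n ≥ 2 and a ∈ ℝ. The function Γ_d(x) = xₙ^{1−a}/|x|^{n−a} satisfies div(xₙ^a ∇Γ_d) = 0 at every point of ℝⁿ₊ \ {0}, i.e., xₙ^a ΔΓ_d + a xₙ^{a−1} ∂Γ_d/∂xₙ = 0 there. -/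
open Real Filter

open Topology

/-! On the half space `Γ_d = xₙ^(1-a) (|x|²)^((a-n)/2)`. The operator `div(xₙ^a ∇·)` maps a
monomial `xₙ^p (|x|²)^q` to `p (p+a-1) xₙ^(p+a-2) (|x|²)^q + 2q (2p+2q+n+a-2) xₙ^(p+a) (|x|²)^(q-1)`,
and both coefficients vanish at `p = 1 - a`, `q = (a - n)/2`. -/

noncomputable def rpowMonomial {n : ℕ} (i : Fin n) (p q : ℝ) (z : EuclideanSpace ℝ (Fin n)) : ℝ :=
  z i ^ p * (‖z‖ ^ 2) ^ q

section rpowMonomial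

variable {n : ℕ} (i : Fin n) (p q : ℝ) {y : EuclideanSpace ℝ (Fin n)}

lemma norm_sq_ne_zero_of_apply_ne_zero (hy : y i ≠ 0) : ‖y‖ ^ 2 ≠ 0 := by
  have : y ≠ 0 := by rintro rfl; exact hy rfl
  positivity

lemma partialD_eq_of_hasFDerivAt {u : EuclideanSpace ℝ (Fin n) → ℝ}
    {L : EuclideanSpace ℝ (Fin n) →L[ℝ] ℝ} (h : HasFDerivAt u L y) (j : Fin n) :
    partialD j u y = L (EuclideanSpace.single j 1) := by
  rw [partialD, h.fderiv]

lemma hasFDerivAt_rpowMonomial (hy : y i ≠ 0) :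
    HasFDerivAt (rpowMonomial i p q)
      ((p * rpowMonomial i (p - 1) q y) • EuclideanSpace.proj i
        + (2 * q * rpowMonomial i p (q - 1) y) • innerSL ℝ y) y := by
  have hS := norm_sq_ne_zero_of_apply_ne_zero i hy
  have hcoord := (Real.hasDerivAt_rpow_const (p := p) (Or.inl hy)).comp_hasFDerivAt y
    (EuclideanSpace.proj i : EuclideanSpace ℝ (Fin n) →L[ℝ] ℝ).hasFDerivAt
  have hnorm := (Real.hasDerivAt_rpow_const (p := q) (Or.inl hS)).comp_hasFDerivAt y
    (hasStrictFDerivAt_norm_sq y).hasFDerivAt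
  refine (hcoord.mul hnorm).congr_fderiv ?_
  ext v
  simp only [EuclideanSpace.coe_proj, Function.comp_apply, add_apply, smul_apply,
    coe_innerSL_apply, nsmul_eq_mul, Nat.cast_ofNat, smul_eq_mul, PiLp.proj_apply, rpowMonomial]
  ring

lemma partialD_rpowMonomial (hy : y i ≠ 0) (j : Fin n) :
    partialD j (rpowMonomial i p q) y
      = (if j = i then p * rpowMonomial i (p - 1) q y else 0)
        + 2 * q * rpowMonomial i p (q - 1) y * y j := by
  rw [partialD_eq_of_hasFDerivAt (hasFDerivAt_rpowMonomial i p q hy)]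
  simp [EuclideanSpace.inner_single_right, eq_comm]

lemma rpowMonomial_sub_one_mul_coord (hy : y i ≠ 0) :
    rpowMonomial i (p - 1) q y * y i = rpowMonomial i p q y := by
  rw [rpowMonomial, rpowMonomial, mul_right_comm, ← Real.rpow_add_one hy, sub_add_cancel]

lemma rpowMonomial_sub_one_mul_normSq (hy : y i ≠ 0) :
    rpowMonomial i p (q - 1) y * ‖y‖ ^ 2 = rpowMonomial i p q y := by
  rw [rpowMonomial, rpowMonomial, mul_assoc,
    ← Real.rpow_add_one (norm_sq_ne_zero_of_apply_ne_zero i hy), sub_add_cancel]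

lemma partialD_partialD_rpowMonomial (hy : y i ≠ 0) (j : Fin n) :
    partialD j (partialD j (rpowMonomial i p q)) y
      = (if j = i then p * (p - 1) * rpowMonomial i (p - 2) q y
          + 4 * p * q * rpowMonomial i p (q - 1) y else 0)
        + 4 * q * (q - 1) * rpowMonomial i p (q - 2) y * y j ^ 2
        + 2 * q * rpowMonomial i p (q - 1) y := by
  set δ : ℝ := if j = i then 1 else 0
  have hloc : partialD j (rpowMonomial i p q) =ᶠ[𝓝 y] fun z =>
      p * δ * rpowMonomial i (p - 1) q z + 2 * q * (rpowMonomial i p (q - 1) z * z j) := by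
    filter_upwards [isOpen_ne.preimage (EuclideanSpace.proj i).continuous |>.mem_nhds hy]
      with z hz
    rw [partialD_rpowMonomial i p q hz]
    split_ifs <;> simp [δ, *] <;> ring
  have hderiv : HasFDerivAt (fun z : EuclideanSpace ℝ (Fin n) =>
      p * δ * rpowMonomial i (p - 1) q z + 2 * q * (rpowMonomial i p (q - 1) z * z j)) _ y :=
    ((hasFDerivAt_rpowMonomial i (p - 1) q hy).const_mul (p * δ)).add
    (((hasFDerivAt_rpowMonomial i p (q - 1) hy).mul
      (EuclideanSpace.proj j).hasFDerivAt).const_mul (2 * q))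
  rw [partialD, hloc.fderiv_eq, ← partialD, partialD_eq_of_hasFDerivAt hderiv]
  simp only [smul_add, PiLp.proj_apply, add_apply,
    smul_apply, PiLp.single_apply, smul_eq_mul, mul_ite, mul_one, mul_zero,
    coe_innerSL_apply, EuclideanSpace.inner_single_right, RCLike.conj_to_real, one_mul]
  rw [show p - 1 - 1 = p - 2 by ring, show q - 1 - 1 = q - 2 by ring]
  by_cases hji : j = i
  · subst hji
    have hcoord := rpowMonomial_sub_one_mul_coord j p (q - 1) hy
    simp only [δ, ↓reduceIte]
    linear_combination (2 * p * q + 2 * q * p) * hcoord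
  · simp only [δ, hji, Ne.symm hji, ↓reduceIte]
    ring

lemma lapl_rpowMonomial (hy : y i ≠ 0) :
    lapl (rpowMonomial i p q) y
      = p * (p - 1) * rpowMonomial i (p - 2) q y
        + 2 * q * (2 * p + 2 * q + n - 2) * rpowMonomial i p (q - 1) y := by
  have hnormSq := rpowMonomial_sub_one_mul_normSq i p (q - 1) hy
  rw [sub_sub, one_add_one_eq_two] at hnormSq
  simp only [lapl, partialD_partialD_rpowMonomial i p q hy, Finset.sum_add_distrib,
    Finset.sum_ite_eq', Finset.mem_univ, if_true, ← Finset.mul_sum,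
    ← EuclideanSpace.real_norm_sq_eq, Finset.sum_const, Finset.card_univ, Fintype.card_fin,
    nsmul_eq_mul]
  linear_combination 4 * q * (q - 1) * hnormSq

lemma coord_rpow_mul_rpowMonomial {a r : ℝ} (hy : 0 < y i) (hr : a + p = r) :
    y i ^ a * rpowMonomial i p q y = rpowMonomial i r q y := by
  rw [rpowMonomial, rpowMonomial, ← mul_assoc, ← Real.rpow_add hy, hr]

lemma divA_rpowMonomial (a : ℝ) (hy : 0 < y i) :
    divA i a (rpowMonomial i p q) y
      = p * (p + a - 1) * rpowMonomial i (p + a - 2) q y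
        + 2 * q * (2 * p + 2 * q + n + a - 2) * rpowMonomial i (p + a) (q - 1) y := by
  have hcoord := rpowMonomial_sub_one_mul_coord i (p + 1) (q - 1) hy.ne'
  rw [add_sub_cancel_right] at hcoord
  rw [divA, lapl_rpowMonomial i p q hy.ne', partialD_rpowMonomial i p q hy.ne', if_pos rfl]
  have h1 := coord_rpow_mul_rpowMonomial i (p - 2) q hy (by ring : a + (p - 2) = p + a - 2)
  have h2 := coord_rpow_mul_rpowMonomial i (p - 1) q hy (by ring : a - 1 + (p - 1) = p + a - 2)
  have h3 := coord_rpow_mul_rpowMonomial i p (q - 1) hy (by ring : a + p = p + a)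
  have h4 := coord_rpow_mul_rpowMonomial i (p + 1) (q - 1) hy (by ring : a - 1 + (p + 1) = p + a)
  linear_combination p * (p - 1) * h1 + a * p * h2 + 2 * q * (2 * p + 2 * q + n - 2) * h3
    + 2 * a * q * h4 + 2 * a * q * y i ^ (a - 1) * hcoord

end rpowMonomial

lemma coord_rpow_div_norm_rpow_eq_rpowMonomial {n : ℕ} (i : Fin n) (p s : ℝ) :
    (fun z : EuclideanSpace ℝ (Fin n) => z i ^ p / ‖z‖ ^ s) = rpowMonomial i p (-s / 2) := by
  funext z
  rw [rpowMonomial, div_eq_mul_inv, ← Real.rpow_neg (norm_nonneg z), ← Real.rpow_natCast,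
    ← Real.rpow_mul (norm_nonneg z)]
  congr 2
  ring

theorem dirichlet_kernel_general (n : ℕ) (a : ℝ)
    (i : Fin n) :
    ∀ x : EuclideanSpace ℝ (Fin n), 0 < x i → x ≠ 0 →
      divA i a (fun z => (z i) ^ (1 - a) / ‖z‖ ^ ((n : ℝ) - a)) x = 0 := by
  intro x hx _
  rw [coord_rpow_div_norm_rpow_eq_rpowMonomial, divA_rpowMonomial _ _ _ _ hx]
  ring

/-- **Dirichlet kernel.** For `n ≥ 2` and `a ∈ ℝ`, the function
`Γ_d(x) = xₙ^(1-a) / |x|^(n-a)` satisfies `div(xₙ^a ∇Γ_d) = 0` at every point of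
`ℝⁿ₊ \ {0}`. -/
theorem dirichlet_kernel (n : ℕ) (hn : 2 ≤ n) (a : ℝ)
    (i : Fin n) (hi : (i : ℕ) = n - 1) :
    ∀ x : EuclideanSpace ℝ (Fin n), 0 < x i → x ≠ 0 →
      divA i a (fun z => (z i) ^ (1 - a) / ‖z‖ ^ ((n : ℝ) - a)) x = 0 :=
  dirichlet_kernel_general n a i
end
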